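/- For every BiLog formula φ, the predicate P on bigraph terms defined by P(G) iff G ⊨ (¬φ)^∀∘ is decomposable: whenever f and g are composable terms and P(f ∘ g) holds, both P(f) and P(g) hold. -/
import Mathlib


namespace BiLog

/-- Bigraph terms: constructors from `Θ`, identities on interfaces from `M`,
composition, and tensor product. -/
inductive BTerm (Θ M : Type) : Type where
  | ctor (θ : Θ)
  | id (I : M)
  | comp (G F : BTerm Θ M)
  | tens (G F : BTerm Θ M)

variable {Θ M : Type} [Mul M] [One M]

/-- Typing of bigraph terms, relative to the interfaces of the constructors. -/
inductive HasType (dom cod : Θ → M) : BTerm Θ M → M → M → Prop where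
  | ctor (θ : Θ) : HasType dom cod (.ctor θ) (dom θ) (cod θ)
  | id (I : M) : HasType dom cod (.id I) I I
  | comp {G F : BTerm Θ M} {I J K : M} :
      HasType dom cod G J K → HasType dom cod F I J → HasType dom cod (.comp G F) I K
  | tens {G F : BTerm Θ M} {I J I' J' : M} :
      HasType dom cod G I J → HasType dom cod F I' J' →
      HasType dom cod (.tens G F) (I * I') (J * J')

/-- Structural congruence of bigraph terms: unit and associativity laws for
composition and tensor, congruence rules, and the interchange law. -/
inductive SCong (dom cod : Θ → M) : BTerm Θ M → BTerm Θ M → Prop where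
  | refl (G) : SCong dom cod G G
  | symm {G F} : SCong dom cod G F → SCong dom cod F G
  | trans {G F H} : SCong dom cod G F → SCong dom cod F H → SCong dom cod G H
  | compCongr {G G' F F'} : SCong dom cod G G' → SCong dom cod F F' →
      SCong dom cod (.comp G F) (.comp G' F')
  | tensCongr {G G' F F'} : SCong dom cod G G' → SCong dom cod F F' →
      SCong dom cod (.tens G F) (.tens G' F')
  | compIdR (G) (I J : M) : HasType dom cod G I J → SCong dom cod (.comp G (.id I)) G
  | compIdL (G) (I J : M) : HasType dom cod G I J → SCong dom cod (.comp (.id J) G) G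
  | compAssoc (G F H) : SCong dom cod (.comp (.comp G F) H) (.comp G (.comp F H))
  | tensId (I J : M) : SCong dom cod (.tens (.id I) (.id J)) (.id (I * J))
  | tensAssoc (G F H) : SCong dom cod (.tens (.tens G F) H) (.tens G (.tens F H))
  | tensUnitR (G) : SCong dom cod (.tens G (.id 1)) G
  | tensUnitL (G) : SCong dom cod (.tens (.id 1) G) G
  | interchange (G₀ F₀ G₁ F₁) :
      SCong dom cod (.comp (.tens G₀ F₀) (.tens G₁ F₁))
        (.tens (.comp G₀ G₁) (.comp F₀ F₁))

/-- BiLog formulas: falsity, implication, the identity constant, a constant for each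
constructor, horizontal and vertical decomposition, and their adjoints. -/
inductive BForm (Θ : Type) : Type where
  | fls
  | imp (A B : BForm Θ)
  | idF
  | ctor (θ : Θ)
  | tens (A B : BForm Θ)
  | comp (A B : BForm Θ)
  | compAdj (A B : BForm Θ)
  | tensAdj (A B : BForm Θ)

/-- Well-typedness of a term. -/
def WT (dom cod : Θ → M) (G : BTerm Θ M) : Prop :=
  ∃ I J, HasType dom cod G I J

/-- `G' ∘ G` is defined: the interfaces match. -/
def Composable (dom cod : Θ → M) (G' G : BTerm Θ M) : Prop :=
  ∃ I J K, HasType dom cod G I J ∧ HasType dom cod G' J K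

/-- The satisfaction relation of BiLog. -/
def Sat (dom cod : Θ → M) : BForm Θ → BTerm Θ M → Prop
  | .fls, _ => False
  | .imp A B, G => Sat dom cod A G → Sat dom cod B G
  | .idF, G => ∃ I, SCong dom cod G (.id I)
  | .ctor θ, G => SCong dom cod G (.ctor θ)
  | .comp A B, G => ∃ G' G'', SCong dom cod G (.comp G' G'') ∧
      Sat dom cod A G' ∧ Sat dom cod B G''
  | .tens A B, G => ∃ G' G'', SCong dom cod G (.tens G' G'') ∧
      Sat dom cod A G' ∧ Sat dom cod B G''
  | .compAdj A B, G => ∀ G', Sat dom cod A G' → Composable dom cod G' G →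
      Sat dom cod B (.comp G' G)
  | .tensAdj A B, G => ∀ G', Sat dom cod A G' → WT dom cod G' → WT dom cod G →
      Sat dom cod B (.tens G' G)

/-- Negation, `¬A := A ⇒ F`. -/
def BForm.neg (A : BForm Θ) : BForm Θ := .imp A .fls

/-- `A • B := ¬(¬A ∘ ¬B)`. -/
def BForm.bullet (A B : BForm Θ) : BForm Θ := .neg (.comp (.neg A) (.neg B))

/-- `A^∀∘ := F • A • F`: every vertical decomposition has a component satisfying `A`. -/
def BForm.allComp (A : BForm Θ) : BForm Θ := .bullet .fls (.bullet A .fls)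

end BiLog

namespace BiLog

/-- For every BiLog formula `φ`, the predicate `P` on bigraph terms
defined by `P(G) iff G ⊨ (¬φ)^∀∘` is decomposable: whenever `f` and `g` are
composable terms and `P(f ∘ g)` holds, both `P(f)` and `P(g)` hold. -/
theorem bilog_allcomp_decomposable {Θ M : Type} [Mul M] [One M]
    (dom cod : Θ → M) (φ : BForm Θ) (f g : BTerm Θ M)
    (hc : Composable dom cod f g)
    (h : Sat dom cod (BForm.allComp (BForm.neg φ)) (.comp f g)) :
    Sat dom cod (BForm.allComp (BForm.neg φ)) f ∧
    Sat dom cod (BForm.allComp (BForm.neg φ)) g := by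
  constructor
  · -- P f
    intro hf
    apply h
    simp only [BForm.allComp, BForm.bullet, BForm.neg, Sat] at hf ⊢
    obtain ⟨G', G'', hsc, h1, h2⟩ := hf
    refine ⟨G', .comp G'' g, ?_, h1, ?_⟩
    · exact .trans (.compCongr hsc (.refl g)) (.compAssoc G' G'' g)
    · intro k
      apply h2
      intro ⟨H, H', hsc', hA, hF⟩
      exact k ⟨H, .comp H' g, .trans (.compCongr hsc' (.refl g)) (.compAssoc H H' g),
        hA, fun x => x.elim⟩
  · -- P g
    intro hg
    apply h
    simp only [BForm.allComp, BForm.bullet, BForm.neg, Sat] at hg ⊢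
    obtain ⟨G', G'', hsc, h1, h2⟩ := hg
    refine ⟨.comp f G', G'', ?_, fun x => x.elim, h2⟩
    exact .trans (.compCongr (.refl f) hsc) (.symm (.compAssoc f G' G''))


end BiLog
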